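/- arXiv:1409.8235 — 3 statements merged into one kernel-verified Lean document; each statement's English description precedes it below -/
import Mathlib

section
/- Let k ≥ 4 and let n satisfy Φ_k ≤ n ≤ Φ_{k+1} − 1. Let SB[n] denote the length of the longest short border of the prefix F_∞[1..n]. Then: SB[n] = Φ_{k-2} + j if n = Φ_k + j with 0 ≤ j < Φ_{k-3}; SB[n] = Φ_{k-3} + j if n = Φ_k + Φ_{k-3} + j with 0 ≤ j < Φ_{k-4}; and SB[n] = Φ_{k-2} + j if n = Φ_k + Φ_{k-2} + j with 0 ≤ j < Φ_{k-3}. -/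
/-!
`F_∞[0, l)` is a suffix of `F_∞[0, n)` exactly when the prefix of length `l` occurs again at
position `n - l`, so the longest short border is read off from the leftmost such occurrence in
the right half of the window. The prefix of length `Φ_{m+2} - 2` has period `Φ_m` while the one
of length `Φ_{m+2} - 1` does not, because `F_{m+1} F_m` and `F_m F_{m+1}` differ in their
second-to-last letter. Shifting by these periods, an induction on `m` shows that in `(0, Φ_{m+1})`
the prefix of length `Φ_m + 1` occurs only at `Φ_m`; this rigidity rules out every longer short
border in each of the three ranges of `n`.
-/

open List Filter

/-- The Zimin pattern `Z_k` as a word over variables `0, 1, ..., k-1`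
(`Z_0` is empty, `Z_{k+1} = Z_k · x_{k+1} · Z_k`). -/
def ziminWord : ℕ → List ℕ
  | 0 => []
  | k + 1 => ziminWord k ++ k :: ziminWord k

/-- `w` is the image of the Zimin pattern `Z_k` under a non-erasing morphism. -/
def IsZiminImage {α : Type*} (k : ℕ) (w : List α) : Prop :=
  ∃ h : ℕ → List α, (∀ i, h i ≠ []) ∧ w = (ziminWord k).flatMap h

/-- The Zimin type of `w`: the maximum `k` such that `w` is an image of `Z_k`
under a non-erasing morphism (0 for the empty word). -/
noncomputable def ziminType {α : Type*} (w : List α) : ℕ :=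
  sSup {k | IsZiminImage k w}

/-- The Zimin pattern `Z_k` embeds in `w`: some factor of `w` is an image of `Z_k`. -/
def ziminEmbeds {α : Type*} (k : ℕ) (w : List α) : Prop :=
  ∃ u : List α, u <:+: w ∧ IsZiminImage k u

/-- Length of the longest border (proper prefix that is also a proper suffix) of `w`. -/
noncomputable def bordLen {α : Type*} (w : List α) : ℕ :=
  sSup {j | w.take j <:+ w ∧ j < w.length}

/-- Length of the longest short border (border of length `< |w|/2`) of `w`. -/
noncomputable def shortBordLen {α : Type*} (w : List α) : ℕ :=
  sSup {j | w.take j <:+ w ∧ 2 * j < w.length}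

/-- The longest border of `w`. -/
noncomputable def bord {α : Type*} (w : List α) : List α := w.take (bordLen w)

/-- The longest short border of `w`. -/
noncomputable def shortBord {α : Type*} (w : List α) : List α := w.take (shortBordLen w)

/-- The Fibonacci words over `Bool` (`a = false`, `b = true`), with
`fibWord 0 = F_0 = a`, `fibWord 1 = F_1 = F_0 F_{-1} = ab`, `F_{n} = F_{n-1} F_{n-2}`. -/
def fibWord : ℕ → List Bool
  | 0 => [false]
  | 1 => [false, true]
  | n + 2 => fibWord (n + 1) ++ fibWord n

/-- The Fibonacci numbers `Φ_n = |F_n|` (`Φ_0 = 1, Φ_1 = 2, Φ_2 = 3, ...`). -/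
def Phi (n : ℕ) : ℕ := (fibWord n).length

/-- The infinite Fibonacci word `F_∞` (0-indexed letters). -/
def fibInf (i : ℕ) : Bool := (fibWord (i + 2)).getD i false

/-- The prefix `F_∞[1..n]` of the infinite Fibonacci word. -/
def fibPrefix (n : ℕ) : List Bool := (List.range n).map fibInf

section PrefixOccurrence

variable {α : Type*}

/-- The prefix of length `len` of `f` occurs again at position `q` (positions start at `0`). -/
def PrefixOccursAt (f : ℕ → α) (q len : ℕ) : Prop := ∀ i < len, f (q + i) = f i

theorem PrefixOccursAt.mono {f : ℕ → α} {q len len' : ℕ} (h : PrefixOccursAt f q len)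
    (hle : len' ≤ len) : PrefixOccursAt f q len' :=
  fun i hi => h i (hi.trans_le hle)

theorem PrefixOccursAt.add_iff {f : ℕ → α} {p L q len : ℕ} (hp : PrefixOccursAt f p L)
    (hle : q + len ≤ L) : PrefixOccursAt f (p + q) len ↔ PrefixOccursAt f q len := by
  refine forall₂_congr fun i hi => ?_
  rw [add_assoc, hp (q + i) (by omega)]

theorem take_suffix_map_range_iff (f : ℕ → α) {n l : ℕ} (hl : l ≤ n) :
    ((List.range n).map f).take l <:+ (List.range n).map f ↔ PrefixOccursAt f (n - l) l := by
  rw [List.suffix_iff_eq_drop, List.ext_getElem_iff]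
  simp only [List.length_take, List.length_drop, List.length_map, List.length_range,
    Nat.min_eq_left hl, List.getElem_take, List.getElem_drop, List.getElem_map,
    List.getElem_range, PrefixOccursAt]
  exact ⟨fun h i hi => (h.2 i hi (by omega)).symm,
    fun h => ⟨by omega, fun i hi _ => (h i hi).symm⟩⟩

end PrefixOccurrence

theorem shortBordLen_eq {α : Type*} {w : List α} {j : ℕ} (hj : w.take j <:+ w)
    (hshort : 2 * j < w.length) (hmax : ∀ l, w.take l <:+ w → 2 * l < w.length → l ≤ j) :
    shortBordLen w = j :=
  IsGreatest.csSup_eq ⟨⟨hj, hshort⟩, fun l hl => hmax l hl.1 hl.2⟩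

theorem shortBordLen_fibPrefix_eq {n p : ℕ} (hpn : p ≤ n) (hn : n < 2 * p)
    (hp : PrefixOccursAt fibInf p (n - p))
    (hmin : ∀ q < p, n < 2 * q → ¬ PrefixOccursAt fibInf q (n - q)) :
    shortBordLen (fibPrefix n) = n - p := by
  have hlen : (fibPrefix n).length = n := by simp [fibPrefix]
  refine shortBordLen_eq ?_ (by omega) fun l hl hshort => ?_
  · rwa [fibPrefix, take_suffix_map_range_iff _ (by omega), Nat.sub_sub_self hpn]
  · rw [hlen] at hshort
    rw [fibPrefix, take_suffix_map_range_iff _ (by omega)] at hl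
    by_contra! hlt
    exact hmin (n - l) (by omega) (by omega) (by rwa [Nat.sub_sub_self (by omega)])

theorem phi_add_two (n : ℕ) : Phi (n + 2) = Phi (n + 1) + Phi n := by
  simp [Phi, fibWord]

theorem lt_phi (n : ℕ) : n < Phi n := by
  induction n using Nat.strong_induction_on with
  | _ n ih =>
    match n with
    | 0 | 1 => decide
    | n + 2 =>
      have := ih n (by omega)
      have := ih (n + 1) (by omega)
      rw [phi_add_two]
      omega

theorem fibWord_prefix_fibWord_succ (n : ℕ) : fibWord n <+: fibWord (n + 1) := by
  match n with
  | 0 => exact ⟨[true], rfl⟩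
  | n + 1 => exact ⟨fibWord n, rfl⟩

theorem fibWord_prefix_fibWord {a b : ℕ} (h : a ≤ b) : fibWord a <+: fibWord b := by
  induction b, h using Nat.le_induction with
  | base => exact List.prefix_refl _
  | succ b _ ih => exact ih.trans (fibWord_prefix_fibWord_succ b)

theorem fibInf_eq_getElem {K i : ℕ} (hi : i < (fibWord K).length) :
    fibInf i = (fibWord K)[i] := by
  have hi' : i < (fibWord (i + 2)).length := (lt_phi (i + 2)).trans' (by omega)
  rw [fibInf, List.getD_eq_getElem _ _ hi']
  rcases le_total K (i + 2) with h | h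
  · exact ((fibWord_prefix_fibWord h).getElem hi).symm
  · exact (fibWord_prefix_fibWord h).getElem hi'

theorem prefixOccursAt_phi_succ (m : ℕ) : PrefixOccursAt fibInf (Phi (m + 1)) (Phi m) := by
  intro r hr
  have h : Phi (m + 1) + r < (fibWord (m + 2)).length := by
    rw [← Phi, phi_add_two]; omega
  rw [fibInf_eq_getElem h, fibInf_eq_getElem (K := m) hr]
  simp only [fibWord, List.getElem_append_right (Nat.le_add_right (Phi (m + 1)) r)]
  congr 1
  rw [Phi]; omega

theorem prefixOccursAt_phi (m : ℕ) : PrefixOccursAt fibInf (Phi m) (Phi (m + 1) - 2) := by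
  induction m with
  | zero => intro i hi; simp [Phi, fibWord] at hi
  | succ m ih =>
    show PrefixOccursAt fibInf (Phi (m + 1)) (Phi (m + 2) - 2)
    intro i hi
    have := phi_add_two m
    rcases Nat.lt_or_ge i (Phi m) with hi' | hi'
    · exact prefixOccursAt_phi_succ m i hi'
    · obtain ⟨r, rfl⟩ := Nat.exists_eq_add_of_le hi'
      rw [← add_assoc, ← phi_add_two, prefixOccursAt_phi_succ (m + 1) r (by omega),
        ih r (by omega)]

theorem fibInf_phi_sub_two_ne (m : ℕ) :
    fibInf (Phi (m + 2) - 2) ≠ fibInf (Phi (m + 1) - 2) := by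
  induction m with
  | zero => decide
  | succ m ih =>
    show fibInf (Phi (m + 3) - 2) ≠ fibInf (Phi (m + 2) - 2)
    have := lt_phi (m + 1)
    have : Phi (m + 3) = Phi (m + 2) + Phi (m + 1) := phi_add_two (m + 1)
    rw [show Phi (m + 3) - 2 = Phi (m + 2) + (Phi (m + 1) - 2) by omega,
      prefixOccursAt_phi_succ (m + 1) _ (by omega)]
    exact ih.symm

theorem not_prefixOccursAt_phi (m : ℕ) :
    ¬ PrefixOccursAt fibInf (Phi m) (Phi (m + 1) - 1) := by
  intro h
  have := lt_phi (m + 1)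
  have := phi_add_two m
  apply fibInf_phi_sub_two_ne m
  rw [← h (Phi (m + 1) - 2) (by omega)]
  congr 1
  omega

theorem eq_phi_of_prefixOccursAt :
    ∀ {m q : ℕ}, 0 < q → q < Phi (m + 1) → PrefixOccursAt fibInf q (Phi m + 1) → q = Phi m
  | 0, q, hq0, hq, h | 1, q, hq0, hq, h | 2, q, hq0, hq, h => by
    have : q < 5 := hq.trans_le (by decide)
    revert hq h
    interval_cases q <;> (unfold PrefixOccursAt; decide)
  | m + 3, q, hq0, hq, h => by
    have := lt_phi (m + 1)
    have := phi_add_two (m + 1)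
    have := phi_add_two (m + 2)
    rcases lt_trichotomy q (Phi (m + 3)) with hlt | heq | hgt
    · obtain rfl := eq_phi_of_prefixOccursAt hq0 hlt (h.mono (by lia))
      exact absurd (h.mono (by lia)) (not_prefixOccursAt_phi (m + 2))
    · exact heq
    · -- shifting back by the period `Φ_{m+3}` lands strictly before `Φ_{m+2}`
      obtain ⟨r, rfl⟩ := Nat.exists_eq_add_of_le hgt.le
      have hr := ((prefixOccursAt_phi (m + 3)).add_iff (len := Phi (m + 2) + 1) (by lia)).1
        (h.mono (by lia))
      have := eq_phi_of_prefixOccursAt (by lia) (by lia) hr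
      lia

theorem not_prefixOccursAt_of_phi_lt {m q : ℕ} (h1 : Phi (m + 2) < q) (h2 : q < Phi (m + 3)) :
    ¬ PrefixOccursAt fibInf q (Phi (m + 3) + Phi m - q) := by
  intro h
  have := phi_add_two m
  have := phi_add_two (m + 1)
  obtain ⟨r, rfl⟩ := Nat.exists_eq_add_of_le h1.le
  rw [(prefixOccursAt_phi (m + 2)).add_iff (by lia)] at h
  obtain rfl : r = Phi m := eq_phi_of_prefixOccursAt (by lia) (by lia) (h.mono (by lia))
  exact not_prefixOccursAt_phi m (h.mono (by lia))

theorem shortBordLen_fibPrefix_of_lt_phi_add_phi {m n : ℕ} (h1 : Phi (m + 4) ≤ n)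
    (h2 : n < Phi (m + 4) + Phi (m + 1)) :
    shortBordLen (fibPrefix n) = n - Phi (m + 3) := by
  have := phi_add_two (m + 1)
  have := phi_add_two (m + 2)
  have := lt_phi (m + 2)
  refine shortBordLen_fibPrefix_eq (by lia) (by lia)
    ((prefixOccursAt_phi (m + 3)).mono (by lia)) fun q hq hnq h => ?_
  have := eq_phi_of_prefixOccursAt (m := m + 2) (by lia) hq (h.mono (by lia))
  lia

theorem shortBordLen_fibPrefix_of_phi_add_phi_le {m n : ℕ} (h1 : Phi (m + 4) + Phi (m + 1) ≤ n)
    (h2 : n < Phi (m + 5)) :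
    shortBordLen (fibPrefix n) = n - Phi (m + 4) := by
  have := phi_add_two (m + 1)
  have := phi_add_two (m + 2)
  have := phi_add_two (m + 3)
  refine shortBordLen_fibPrefix_eq (by lia) (by lia)
    ((prefixOccursAt_phi (m + 4)).mono (by lia)) fun q hq hnq h => ?_
  exact not_prefixOccursAt_of_phi_lt (m := m + 1) (by lia) hq (h.mono (by lia))

theorem shortBordLen_fibPrefix_general (k : ℕ) (hk : 4 ≤ k) (n : ℕ) :
    (∀ j, j < Phi (k - 3) → n = Phi k + j →
        shortBordLen (fibPrefix n) = Phi (k - 2) + j) ∧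
    (∀ j, j < Phi (k - 4) → n = Phi k + Phi (k - 3) + j →
        shortBordLen (fibPrefix n) = Phi (k - 3) + j) ∧
    (∀ j, j < Phi (k - 3) → n = Phi k + Phi (k - 2) + j →
        shortBordLen (fibPrefix n) = Phi (k - 2) + j) := by
  obtain ⟨m, rfl⟩ := Nat.exists_eq_add_of_le' hk
  simp only [show m + 4 - 3 = m + 1 from rfl, show m + 4 - 2 = m + 2 from rfl,
    show m + 4 - 4 = m from rfl]
  have := phi_add_two m
  have := phi_add_two (m + 1)
  have := phi_add_two (m + 2)
  have := phi_add_two (m + 3)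
  refine ⟨fun j hj hn => ?_, fun j hj hn => ?_, fun j hj hn => ?_⟩
  · rw [shortBordLen_fibPrefix_of_lt_phi_add_phi (m := m) (by lia) (by lia)]
    lia
  · rw [shortBordLen_fibPrefix_of_phi_add_phi_le (m := m) (by lia) (by lia)]
    lia
  · rw [shortBordLen_fibPrefix_of_phi_add_phi_le (m := m) (by lia) (by lia)]
    lia

/-- Equation (2): the longest short border of the prefix `F_∞[1..n]`, for
`Φ_k ≤ n ≤ Φ_{k+1} − 1`, `k ≥ 4`, by cases on the position of `n` in the range. -/
theorem shortBordLen_fibPrefix (k : ℕ) (hk : 4 ≤ k) (n : ℕ)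
    (h1 : Phi k ≤ n) (h2 : n ≤ Phi (k + 1) - 1) :
    (∀ j, j < Phi (k - 3) → n = Phi k + j →
        shortBordLen (fibPrefix n) = Phi (k - 2) + j) ∧
    (∀ j, j < Phi (k - 4) → n = Phi k + Phi (k - 3) + j →
        shortBordLen (fibPrefix n) = Phi (k - 3) + j) ∧
    (∀ j, j < Phi (k - 3) → n = Phi k + Phi (k - 2) + j →
        shortBordLen (fibPrefix n) = Phi (k - 2) + j) :=
  shortBordLen_fibPrefix_general k hk n
end

section
/- Let w be an infinite word such that for every i ≥ 1 the Zimin type of the prefix w[1..i] equals ⌊log₂(i+1)⌋ (the maximal possible value, i.e., the Zimin type sequence of w equals 1² 2⁴ 3⁸ ⋯ n^{2^n} ⋯). Then w is unary: all letters of w are equal. -/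
open List Filter

theorem ziminWord_length (k : ℕ) : (ziminWord k).length = 2 ^ k - 1 := by
  induction k with
  | zero => rfl
  | succ k ih =>
    have : 1 ≤ 2 ^ k := Nat.one_le_two_pow
    simp only [ziminWord, length_append, length_cons, ih, pow_succ]
    omega

section

variable {α : Type*}

theorem length_le_length_flatMap {β : Type*} {f : β → List α} (hf : ∀ b, f b ≠ [])
    (l : List β) : l.length ≤ (l.flatMap f).length := by
  induction l with
  | nil => simp
  | cons b l ih =>
    have := length_pos_iff.mpr (hf b)
    simp only [flatMap_cons, length_append, length_cons]
    omega

namespace IsZiminImage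

variable {k : ℕ} {w : List α}

theorem length_ge (hw : IsZiminImage k w) : 2 ^ k - 1 ≤ w.length := by
  obtain ⟨f, hf, rfl⟩ := hw
  simpa only [ziminWord_length] using length_le_length_flatMap hf (ziminWord k)

theorem exists_eq_append (hw : IsZiminImage (k + 1) w) :
    ∃ A x, w = A ++ x ++ A ∧ x ≠ [] ∧ IsZiminImage k A := by
  obtain ⟨f, hf, rfl⟩ := hw
  exact ⟨_, f k, by simp [ziminWord], hf k, f, hf, rfl⟩

theorem take_isSuffix (hw : IsZiminImage (k + 1) w) (hlen : w.length ≤ 2 ^ (k + 1)) :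
    w.take (2 ^ k - 1) <:+ w := by
  obtain ⟨A, x, rfl, hx, hA⟩ := hw.exists_eq_append
  have hAlen : A.length = 2 ^ k - 1 := by
    have := hA.length_ge
    have := length_pos_iff.mpr hx
    simp only [length_append, pow_succ] at hlen
    omega
  rw [← hAlen, append_assoc, take_left, ← append_assoc]
  exact suffix_append _ _

end IsZiminImage

theorem isZiminImage_ziminType {w : List α} (hw : w ≠ []) : IsZiminImage (ziminType w) w := by
  have hbdd : BddAbove {k | IsZiminImage k w} :=
    ⟨w.length, fun k hk => by have := hk.length_ge; have := Nat.lt_two_pow_self (n := k); omega⟩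
  have hone : 1 ∈ {k | IsZiminImage k w} := ⟨fun _ => w, fun _ => hw, by simp [ziminWord]⟩
  exact Nat.sSup_mem ⟨1, hone⟩ hbdd

theorem apply_sub_add_eq_of_take_isSuffix (w : ℕ → α) {L n t : ℕ}
    (hsuff : ((range L).map w).take n <:+ (range L).map w) (hn : n ≤ L) (ht : t < n) :
    w (L - n + t) = w t := by
  have := hsuff.getElem (i := t) (by simp only [length_take, length_map, length_range]; omega)
  simp only [getElem_take, getElem_map, getElem_range, length_map, length_range,
    length_take, Nat.min_eq_left hn] at this
  exact this.symm

theorem apply_two_pow_add_eq {w : ℕ → α}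
    (h : ∀ i, 1 ≤ i → ziminType ((List.range i).map w) = Nat.log 2 (i + 1))
    {m d t : ℕ} (hd : d ≤ 1) (ht : t < 2 ^ m - 1) : w (2 ^ m + d + t) = w t := by
  have hpow : 2 ^ (m + 1) = 2 * 2 ^ m := by ring
  have hpow' : 2 ^ (m + 2) = 4 * 2 ^ m := by ring
  have : 1 ≤ 2 ^ m := Nat.one_le_two_pow
  set L := 2 ^ (m + 1) - 1 + d
  have hlog : Nat.log 2 (L + 1) = m + 1 := Nat.log_eq_of_pow_le_of_lt_pow (by omega) (by omega)
  have hlen : ((range L).map w).length = L := by simp only [length_map, length_range]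
  have hz := isZiminImage_ziminType (w := (range L).map w) (ne_nil_of_length_pos (by omega))
  rw [h L (by omega), hlog] at hz
  have hsuff := hz.take_isSuffix (by omega)
  have := apply_sub_add_eq_of_take_isSuffix w hsuff (by omega) ht
  rwa [show L - (2 ^ m - 1) + t = 2 ^ m + d + t by omega] at this

end

/-- Lemma 7: any infinite word whose Zimin type sequence is maximal, i.e. the
prefix of each length `i ≥ 1` has Zimin type `⌊log₂(i+1)⌋`, is unary. -/
theorem unary_of_max_ziminType_seq {α : Type*} (w : ℕ → α)
    (h : ∀ i, 1 ≤ i → ziminType ((List.range i).map w) = Nat.log 2 (i + 1)) :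
    ∀ i j, w i = w j := by
  have step (t : ℕ) : w (t + 1) = w t := by
    have ht : t + 1 < 2 ^ (t + 2) - 1 := by
      have := Nat.lt_two_pow_self (n := t + 1)
      have : 2 ^ (t + 2) = 2 * 2 ^ (t + 1) := by ring
      omega
    calc w (t + 1) = w (2 ^ (t + 2) + 0 + (t + 1)) := (apply_two_pow_add_eq h (by omega) ht).symm
      _ = w (2 ^ (t + 2) + 1 + t) := by congr 1; omega
      _ = w t := apply_two_pow_add_eq h le_rfl (by omega)
  have eq_zero (i : ℕ) : w i = w 0 := by
    induction i with
    | zero => rfl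
    | succ i ih => exact (step i).trans ih
  intro i j
  rw [eq_zero i, eq_zero j]
end

section
/- For all n, k ≥ 2, assuming f(n,k) is finite, the inequality f(n+1, k) ≤ (f(n,k) + 1)·m(n,k) + f(n,k) holds, where m(n,k) is the number of k-ary minimal words of Zimin type n. -/
open List Filter

/-- `f(n,k)`: the minimum `N` such that `Z_n` embeds in every word of length at
least `N` over a `k`-letter alphabet. -/
noncomputable def fbound (n k : ℕ) : ℕ :=
  sInf {N | ∀ w : List (Fin k), N ≤ w.length → ziminEmbeds n w}

/-- A word of Zimin type `n` is minimal if every proper factor has Zimin type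
strictly less than `n`. -/
def IsMinimalZimin {α : Type*} (n : ℕ) (w : List α) : Prop :=
  ziminType w = n ∧ ∀ u : List α, u <:+: w → u ≠ w → ziminType u < n

/-- `m(n,k)`: the number of `k`-ary minimal words of Zimin type `n`. -/
noncomputable def mcount (n k : ℕ) : ℕ :=
  {w : List (Fin k) | IsMinimalZimin n w}.ncard

/-!
Suppose every word of length `N` contains an image of `Z_n`, and let `m` count the minimal words of
Zimin type `n`. Cut a word of length `(N + 1) m + N` into `m + 1` windows of length `N`,
consecutive windows being separated by one letter. Each window contains an image of `Z_n`, hence a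
minimal word of type `n`; such a word is no longer than `N`, so there are at most `m` of them. By
pigeonhole two windows contain the same minimal word `v`, and the factor `v y v` spanning them,
with `y` nonempty because of the separating letter, is an image of `Z_{n+1}`.
-/

variable {α : Type*} {n : ℕ} {u w : List α}

theorem lt_of_mem_ziminWord {k i : ℕ} (h : i ∈ ziminWord k) : i < k := by
  induction k with
  | zero => simp [ziminWord] at h
  | succ k ih =>
    simp only [ziminWord, List.mem_append, List.mem_cons] at h
    rcases h with h | rfl | h <;> grind

theorem le_length_ziminWord (k : ℕ) : k ≤ (ziminWord k).length := by
  induction k with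
  | zero => simp
  | succ k ih => simp only [ziminWord, List.length_append, List.length_cons]; omega

theorem IsZiminImage.le_length (h : IsZiminImage n w) : n ≤ w.length := by
  obtain ⟨f, hf, rfl⟩ := h
  refine (le_length_ziminWord n).trans ?_
  rw [List.length_flatMap]
  simpa using List.length_le_sum_of_one_le ((ziminWord n).map fun i => (f i).length)
    fun _ hi => by
    obtain ⟨i, -, rfl⟩ := List.mem_map.1 hi
    exact List.length_pos_iff.2 (hf i)

theorem isZiminImage_succ_iff :
    IsZiminImage (n + 1) w ↔ ∃ u g, IsZiminImage n u ∧ g ≠ [] ∧ w = u ++ g ++ u := by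
  constructor
  · rintro ⟨f, hf, rfl⟩
    exact ⟨_, f n, ⟨f, hf, rfl⟩, hf n, by simp [ziminWord]⟩
  · rintro ⟨u, g, ⟨f, hf, rfl⟩, hg, rfl⟩
    -- the new variable `x_n` does not occur in `Z_n`, so it can be sent to `g` freely
    have hZ : (ziminWord n).flatMap (Function.update f n g) = (ziminWord n).flatMap f :=
      List.flatMap_congr fun i hi => Function.update_of_ne (lt_of_mem_ziminWord hi).ne _ _
    refine ⟨Function.update f n g, fun i => ?_, ?_⟩
    · rcases eq_or_ne i n with rfl | hi
      · simpa using hg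
      · simpa [hi] using hf i
    · simp [ziminWord, hZ]

theorem IsZiminImage.append_append (h : IsZiminImage n u) {g : List α} (hg : g ≠ []) :
    IsZiminImage (n + 1) (u ++ g ++ u) :=
  isZiminImage_succ_iff.2 ⟨u, g, h, hg, rfl⟩

theorem IsZiminImage.of_succ (hn : 1 ≤ n) (h : IsZiminImage (n + 1) w) : IsZiminImage n w := by
  obtain ⟨j, rfl⟩ := Nat.exists_eq_add_of_le' hn
  obtain ⟨u, x, hu, hx, rfl⟩ := isZiminImage_succ_iff.1 h
  obtain ⟨v, y, hv, -, rfl⟩ := isZiminImage_succ_iff.1 hu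
  -- `(v y v) x (v y v) = v (y v x v y) v`
  simpa using hv.append_append (g := y ++ v ++ x ++ v ++ y) (by simp [hx])

theorem IsZiminImage.of_le {s : ℕ} (hn : 1 ≤ n) (hns : n ≤ s) (h : IsZiminImage s w) :
    IsZiminImage n w := by
  induction s, hns using Nat.le_induction generalizing w with
  | base => exact h
  | succ s hs ih => exact ih (h.of_succ (hn.trans hs))

theorem bddAbove_setOf_isZiminImage (w : List α) : BddAbove {k | IsZiminImage k w} :=
  ⟨w.length, fun _ hk => hk.le_length⟩

theorem le_ziminType (h : IsZiminImage n w) : n ≤ ziminType w :=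
  le_csSup (bddAbove_setOf_isZiminImage w) h

theorem isZiminImage_iff_le_ziminType (hn : 1 ≤ n) : IsZiminImage n w ↔ n ≤ ziminType w := by
  refine ⟨le_ziminType, fun h => ?_⟩
  have hne : {k | IsZiminImage k w}.Nonempty := by
    by_contra hempty
    rw [Set.not_nonempty_iff_eq_empty] at hempty
    simp [ziminType, hempty] at h
    omega
  exact (Nat.sSup_mem hne (bddAbove_setOf_isZiminImage w)).of_le hn h

theorem IsMinimalZimin.isZiminImage (hn : 1 ≤ n) (h : IsMinimalZimin n w) : IsZiminImage n w :=
  (isZiminImage_iff_le_ziminType hn).2 h.1.ge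

theorem exists_ne_infix_isZiminImage_of_not_isMinimalZimin (hn : 1 ≤ n) (h : IsZiminImage n w)
    (hmin : ¬IsMinimalZimin n w) : ∃ u, u <:+: w ∧ u ≠ w ∧ IsZiminImage n u := by
  simp only [IsMinimalZimin, not_and_or, not_forall, not_lt] at hmin
  rcases hmin with htype | ⟨u, hu, hne, htype⟩
  · have : n + 1 ≤ ziminType w := lt_of_le_of_ne (le_ziminType h) (Ne.symm htype)
    obtain ⟨u, x, hu, hx, rfl⟩ :=
      isZiminImage_succ_iff.1 ((isZiminImage_iff_le_ziminType (by omega)).2 this)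
    refine ⟨u, by simpa using List.infix_append [] u (x ++ u), fun h => hx ?_, hu⟩
    have hlen := congrArg List.length h
    simp only [List.length_append] at hlen
    exact List.length_eq_zero_iff.1 (by omega)
  · exact ⟨u, hu, hne, (isZiminImage_iff_le_ziminType hn).2 htype⟩

theorem IsZiminImage.exists_infix_isMinimalZimin (hn : 1 ≤ n) (h : IsZiminImage n w) :
    ∃ v, v <:+: w ∧ IsMinimalZimin n v := by
  induction hl : w.length using Nat.strong_induction_on generalizing w with
  | _ l ih =>
    by_cases hmin : IsMinimalZimin n w
    · exact ⟨w, List.infix_refl w, hmin⟩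
    obtain ⟨u, huw, hne, hu⟩ := exists_ne_infix_isZiminImage_of_not_isMinimalZimin hn h hmin
    have hlt : u.length < l :=
      hl ▸ lt_of_le_of_ne huw.length_le fun h => hne (huw.eq_of_length h)
    obtain ⟨v, hvu, hv⟩ := ih _ hlt hu rfl
    exact ⟨v, hvu.trans huw, hv⟩

theorem exists_infix_isMinimalZimin {N : ℕ}
    (hN : ∀ w : List α, N ≤ w.length → ziminEmbeds n w) (hn : 1 ≤ n)
    (hw : N ≤ w.length) :
    ∃ v, v <:+: w ∧ IsMinimalZimin n v := by
  obtain ⟨u, huw, hu⟩ := hN w hw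
  obtain ⟨v, hvu, hv⟩ := hu.exists_infix_isMinimalZimin hn
  exact ⟨v, hvu.trans huw, hv⟩

theorem IsMinimalZimin.length_le {N : ℕ}
    (hN : ∀ w : List α, N ≤ w.length → ziminEmbeds n w) (hw : IsMinimalZimin n w) :
    w.length ≤ N := by
  by_contra! hlt
  obtain ⟨u, hu, hZ⟩ := hN (w.take N) (by simp; omega)
  have hne : u ≠ w := by
    rintro rfl
    have := hu.length_le
    simp only [List.length_take] at this
    omega
  exact (hw.2 u (hu.trans (List.take_prefix N w).isInfix) hne).not_ge (le_ziminType hZ)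

theorem finite_setOf_isMinimalZimin [Finite α] {N : ℕ}
    (hN : ∀ w : List α, N ≤ w.length → ziminEmbeds n w) :
    {w : List α | IsMinimalZimin n w}.Finite :=
  (List.finite_length_le α N).subset fun _ hw => hw.length_le hN

theorem exists_append_append_infix_of_infix_take_of_infix_drop {v : List α} {a b : ℕ}
    (hab : a < b) (hb : b ≤ w.length) (ha : v <:+: w.take a) (hb' : v <:+: w.drop b) :
    ∃ y ≠ [], v ++ y ++ v <:+: w := by
  obtain ⟨s, t, hst⟩ := ha
  obtain ⟨s', t', hst'⟩ := hb'
  set gap := (w.drop a).take (b - a)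
  have hgap : gap.length = b - a := by simp only [gap, List.length_take, List.length_drop]; omega
  have hw : w = w.take a ++ gap ++ w.drop b := by
    rw [← List.take_add, Nat.add_sub_cancel' hab.le, List.take_append_drop]
  refine ⟨t ++ gap ++ s', fun h => ?_, s, t', ?_⟩
  · have := congrArg List.length h
    simp only [List.length_append, hgap, List.length_nil] at this
    omega
  · rw [hw, ← hst, ← hst']
    simp only [List.append_assoc]

theorem ziminEmbeds_succ_of_length_le [Finite α] {N : ℕ} (hn : 1 ≤ n)
    (hN : ∀ w : List α, N ≤ w.length → ziminEmbeds n w)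
    (hw : (N + 1) * {v : List α | IsMinimalZimin n v}.ncard + N ≤ w.length) :
    ziminEmbeds (n + 1) w := by
  set M := {v : List α | IsMinimalZimin n v}
  have hstart : ∀ i ≤ M.ncard, i * (N + 1) + N ≤ w.length := fun i hi => by nlinarith
  have hwindow : ∀ i : Fin (M.ncard + 1), ∃ v ∈ M, v <:+: (w.drop (i * (N + 1))).take N := by
    intro i
    have := hstart i (Nat.lt_succ_iff.1 i.2)
    obtain ⟨v, hv, hvM⟩ :=
      exists_infix_isMinimalZimin hN hn (w := (w.drop (i * (N + 1))).take N)
        (by simp only [List.length_take, List.length_drop]; omega)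
    exact ⟨v, hvM, hv⟩
  choose V hVM hV using hwindow
  obtain ⟨i, -, j, -, hij, hVij⟩ := Set.exists_ne_map_eq_of_ncard_lt_of_maps_to (s := Set.univ)
    (by simp [Set.ncard_univ]) (fun i _ => hVM i) (finite_setOf_isMinimalZimin hN)
  wlog hlt : i < j generalizing i j
  · exact this j i hij.symm hVij.symm (lt_of_le_of_ne (not_lt.1 hlt) hij.symm)
  have hsucc : (i : ℕ) + 1 ≤ j := hlt
  obtain ⟨y, hy, hinf⟩ := exists_append_append_infix_of_infix_take_of_infix_drop
    (a := i * (N + 1) + N) (b := j * (N + 1)) (by nlinarith) (by nlinarith [hstart j (by omega)])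
    ((hV i).trans (by rw [List.take_add]; exact (List.suffix_append _ _).isInfix))
    (hVij ▸ (hV j).trans (List.take_prefix _ _).isInfix)
  exact ⟨_, hinf, ((hVM i).isZiminImage hn).append_append hy⟩

theorem fbound_succ_le_general (n k : ℕ) (hn : 2 ≤ n)
    (hfin : {N | ∀ w : List (Fin k), N ≤ w.length → ziminEmbeds n w}.Nonempty) :
    fbound (n + 1) k ≤ (fbound n k + 1) * mcount n k + fbound n k ∧
    ∀ w : List (Fin k), (fbound n k + 1) * mcount n k + fbound n k ≤ w.length →
      ziminEmbeds (n + 1) w := by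
  have key : ∀ w : List (Fin k), (fbound n k + 1) * mcount n k + fbound n k ≤ w.length →
      ziminEmbeds (n + 1) w :=
    fun _ hw => ziminEmbeds_succ_of_length_le (by omega) (Nat.sInf_mem hfin) hw
  exact ⟨Nat.sInf_le key, key⟩

/-- Lemma 9: for `n, k ≥ 2` (assuming `f(n,k)` is finite),
`f(n+1,k) ≤ (f(n,k)+1)·m(n,k) + f(n,k)`; in particular every `k`-ary word of
that length contains an embedded `Z_{n+1}`. -/
theorem fbound_succ_le (n k : ℕ) (hn : 2 ≤ n) (hk : 2 ≤ k)
    (hfin : {N | ∀ w : List (Fin k), N ≤ w.length → ziminEmbeds n w}.Nonempty) :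
    fbound (n + 1) k ≤ (fbound n k + 1) * mcount n k + fbound n k ∧
    ∀ w : List (Fin k), (fbound n k + 1) * mcount n k + fbound n k ≤ w.length →
      ziminEmbeds (n + 1) w :=
  fbound_succ_le_general n k hn hfin
end
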